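/- If σ, τ ∈ S_n satisfy hd(σ,τ) − hd(σ^CT, τ^CT) = 3, then the cycle of σ⁻¹τ containing n-1 has length exactly 3, and after contraction the corresponding support is fixed: σ⁻¹τ equals (σ^CT)⁻¹τ^CT (viewed in S_n fixing n-1) times the 3-cycle (n-1, σ(n-1), τ(n-1)). -/

import Mathlib

/-- Hamming distance between two permutations of `Fin n`. -/
def hd {n : ℕ} (σ τ : Equiv.Perm (Fin n)) : ℕ :=
  (Finset.univ.filter fun x => σ x ≠ τ x).card

/-- Contraction of a permutation: delete the symbol `n` (the largest one)
from the cycle decomposition of `σ`. -/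
def contract {n : ℕ} (σ : Equiv.Perm (Fin (n + 1))) : Equiv.Perm (Fin n) :=
  Equiv.removeNone (finSuccEquivLast.permCongr σ)

/-- Extension of a permutation of `Fin n` to a permutation of `Fin (n+1)`
fixing the last symbol. -/
def extendPerm {n : ℕ} (π : Equiv.Perm (Fin n)) : Equiv.Perm (Fin (n + 1)) :=
  finSuccEquivLast.permCongr.symm (Equiv.optionCongr π)

/-- `m`-fold iterated contraction. -/
def contractIter : ∀ (m : ℕ) {n : ℕ}, Equiv.Perm (Fin (n + m)) → Equiv.Perm (Fin n)
  | 0, _, σ => σ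
  | m + 1, _, σ => contractIter m (contract σ)

/-- Hamming distance of a permutation array: the minimum Hamming distance
between distinct elements. -/
noncomputable def hdP {n : ℕ} (P : Set (Equiv.Perm (Fin n))) : ℕ :=
  sInf {d | ∃ σ ∈ P, ∃ τ ∈ P, σ ≠ τ ∧ hd σ τ = d}

open Equiv Equiv.Perm Finset Fin

lemma extendPerm_castSucc {n : ℕ} (π : Equiv.Perm (Fin n)) (i : Fin n) :
    extendPerm π (castSucc i) = castSucc (π i) := by
  simp [extendPerm]

lemma extendPerm_last {n : ℕ} (π : Equiv.Perm (Fin n)) :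
    extendPerm π (Fin.last n) = Fin.last n := by
  simp [extendPerm]

lemma hd_eq_card_support {n : ℕ} (σ τ : Equiv.Perm (Fin n)) :
    hd σ τ = (τ * σ⁻¹).support.card := by
  unfold hd
  apply Finset.card_bij' (fun x _ => σ x) (fun y _ => σ⁻¹ y)
  · intro x hx
    simp only [mem_filter, mem_univ, true_and] at hx
    simp only [Equiv.Perm.mem_support, Equiv.Perm.mul_apply, Equiv.Perm.inv_def, Equiv.symm_apply_apply]
    exact fun hcon => hx hcon.symm
  · intro y hy
    simp only [Equiv.Perm.mem_support, Equiv.Perm.mul_apply] at hy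
    simp only [mem_filter, mem_univ, true_and, Equiv.Perm.inv_def, Equiv.apply_symm_apply]
    exact fun hcon => hy hcon.symm
  · intro x _; simp
  · intro y _; simp

lemma extendPerm_contract {n : ℕ} (σ : Equiv.Perm (Fin (n + 1))) :
    extendPerm (contract σ) = Equiv.swap (Fin.last n) (σ (Fin.last n)) * σ := by
  ext x
  induction x using Fin.lastCases with
  | last =>
      rw [extendPerm_last]
      simp [Equiv.Perm.mul_apply, Equiv.swap_apply_right]
  | cast i =>
      rw [extendPerm_castSucc]
      by_cases hl : σ (castSucc i) = Fin.last n
      · have hcon : some (contract σ i) = finSuccEquivLast (σ (Fin.last n)) := by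
          have h1 : (finSuccEquivLast.permCongr σ) (some i) = none := by
            simp [Equiv.permCongr_apply, hl]
          have h2 := Equiv.removeNone_none (finSuccEquivLast.permCongr σ) h1
          simpa [contract, Equiv.permCongr_apply] using h2
        have hne : σ (Fin.last n) ≠ Fin.last n := by
          intro hcon2
          exact (Fin.castSucc_lt_last i).ne (σ.injective (hl.trans hcon2.symm))
        have heq : (castSucc (contract σ i)) = σ (Fin.last n) := by
          have := congrArg finSuccEquivLast.symm hcon
          simpa using this
        rw [heq, Equiv.Perm.mul_apply, hl, Equiv.swap_apply_left]
      · obtain ⟨k, hk⟩ := Fin.exists_castSucc_eq.2 hl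
        have h1 : (finSuccEquivLast.permCongr σ) (some i) = some k := by
          simp [Equiv.permCongr_apply, ← hk]
        have h2 := Equiv.removeNone_some (finSuccEquivLast.permCongr σ) ⟨k, h1⟩
        have hcs : contract σ i = k := by
          have h3 := h2.trans h1
          simpa [contract] using h3
        have hne2 : σ (castSucc i) ≠ σ (Fin.last n) :=
          fun hcon => (Fin.castSucc_lt_last i).ne (σ.injective hcon)
        rw [hcs, hk, Equiv.Perm.mul_apply, Equiv.swap_apply_of_ne_of_ne hl hne2]

lemma extendPerm_mul {n : ℕ} (π ρ : Equiv.Perm (Fin n)) :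
    extendPerm (π * ρ) = extendPerm π * extendPerm ρ := by
  ext x
  induction x using Fin.lastCases with
  | last => simp [Equiv.Perm.mul_apply, extendPerm_last]
  | cast i => simp [Equiv.Perm.mul_apply, extendPerm_castSucc]

lemma extendPerm_inv {n : ℕ} (π : Equiv.Perm (Fin n)) :
    extendPerm π⁻¹ = (extendPerm π)⁻¹ := by
  rw [eq_inv_iff_mul_eq_one, ← extendPerm_mul]
  ext x
  induction x using Fin.lastCases with
  | last => simp [extendPerm_last]
  | cast i => simp [extendPerm_castSucc]

lemma extendPerm_support_card {n : ℕ} (π : Equiv.Perm (Fin n)) :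
    (extendPerm π).support.card = π.support.card := by
  have hs : (extendPerm π).support = π.support.map ⟨Fin.castSucc, Fin.castSucc_injective n⟩ := by
    ext y
    simp only [Finset.mem_map, Function.Embedding.coeFn_mk, Equiv.Perm.mem_support]
    induction y using Fin.lastCases with
    | last =>
        constructor
        · intro hne; exact absurd (extendPerm_last π) hne
        · rintro ⟨x, _, hx⟩; exact absurd hx (Fin.castSucc_lt_last x).ne
    | cast i =>
        rw [extendPerm_castSucc]
        constructor
        · intro hne
          exact ⟨i, fun hcon => hne (by rw [hcon]), rfl⟩
        · rintro ⟨x, hx, hxe⟩ hcon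
          cases Fin.castSucc_injective _ hxe
          exact hx (Fin.castSucc_injective _ hcon)
  rw [hs, Finset.card_map]


lemma key_lemma {α : Type*} [DecidableEq α] [Fintype α] (π : Equiv.Perm α) (a b c : α)
    (hc : π b = c)
    (h : (π.support.card : ℤ) -
        (((Equiv.swap a c * π * Equiv.swap a b).support.card : ℕ) : ℤ) = 3) :
    π a = b ∧ π c = a ∧ a ≠ b ∧ b ≠ c ∧ a ≠ c := by
  set π' := Equiv.swap a c * π * Equiv.swap a b with hπ'
  set d := π⁻¹ a with hd
  set S : Finset α := {a, b, d} with hS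
  -- agreement outside S
  have hagree : ∀ x, x ∉ S → π' x = π x := by
    intro x hx
    simp only [hS, Finset.mem_insert, Finset.mem_singleton, not_or] at hx
    obtain ⟨hxa, hxb, hxd⟩ := hx
    show Equiv.swap a c (π (Equiv.swap a b x)) = π x
    rw [Equiv.swap_apply_of_ne_of_ne hxa hxb]
    have h1 : π x ≠ a := fun hcon => hxd (by rw [hd, ← hcon, Equiv.Perm.inv_def, Equiv.symm_apply_apply])
    have h2 : π x ≠ c := fun hcon => hxb (π.injective (hcon.trans hc.symm))
    rw [Equiv.swap_apply_of_ne_of_ne h1 h2]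
  have hsd : π.support \ S = π'.support \ S := by
    ext x
    simp only [Finset.mem_sdiff, Equiv.Perm.mem_support]
    constructor
    · rintro ⟨h1, h2⟩
      refine ⟨fun hcon => h1 ?_, h2⟩
      rw [← hagree x h2]; exact hcon
    · rintro ⟨h1, h2⟩
      refine ⟨fun hcon => h1 ?_, h2⟩
      rw [hagree x h2]; exact hcon
  have hcard : ∀ ρ : Equiv.Perm α, ρ.support.card =
      (ρ.support ∩ S).card + (ρ.support \ S).card := by
    intro ρ; rw [Finset.card_inter_add_card_sdiff]
  have hSle : S.card ≤ 3 := by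
    refine (Finset.card_insert_le _ _).trans ?_
    have := (Finset.card_insert_le b ({d} : Finset α))
    simpa using Nat.succ_le_succ this
  have hint : (π.support ∩ S).card = (π'.support ∩ S).card + 3 := by
    have e1 := hcard π
    have e2 := hcard π'
    rw [hsd] at e1
    omega
  have hle : (π.support ∩ S).card ≤ 3 :=
    (Finset.card_le_card (Finset.inter_subset_right)).trans hSle
  have h3 : (π.support ∩ S).card = 3 := by omega
  have h0 : (π'.support ∩ S).card = 0 := by omega
  -- S has exactly 3 elements, all in π.support
  have hScard : S.card = 3 := le_antisymm hSle (h3 ▸ Finset.card_le_card Finset.inter_subset_right)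
  have hSsub : S ⊆ π.support := by
    have hsub : π.support ∩ S ⊆ S := Finset.inter_subset_right
    have heq : π.support ∩ S = S := Finset.eq_of_subset_of_card_le hsub (by omega)
    intro x hx; rw [← heq] at hx; exact (Finset.mem_inter.1 hx).1
  have hdisj : ∀ x ∈ S, π' x = x := by
    intro x hx
    have hnot : x ∉ π'.support := by
      intro hcon
      have hx2 : x ∈ π'.support ∩ S := Finset.mem_inter.2 ⟨hcon, hx⟩
      rw [Finset.card_eq_zero.1 h0] at hx2
      exact absurd hx2 (Finset.notMem_empty x)
    simpa [Equiv.Perm.mem_support, not_not] using hnot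
  -- distinctness of a, b, d
  have two : ∀ (u v : α), ({u, v} : Finset α).card ≤ 2 := fun u v =>
    (Finset.card_insert_le _ _).trans (by simp)
  have hab : a ≠ b := by
    intro he
    have hsub : S ⊆ {a, d} := by
      rw [hS]; intro x hx
      simp only [Finset.mem_insert, Finset.mem_singleton] at hx ⊢
      rcases hx with rfl | rfl | rfl
      · exact Or.inl rfl
      · exact Or.inl he.symm
      · exact Or.inr rfl
    have h4 := Finset.card_le_card hsub
    have h5 := two a d
    omega
  have had : a ≠ d := by
    intro he
    have hsub : S ⊆ {a, b} := by
      rw [hS]; intro x hx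
      simp only [Finset.mem_insert, Finset.mem_singleton] at hx ⊢
      rcases hx with rfl | rfl | rfl
      · exact Or.inl rfl
      · exact Or.inr rfl
      · exact Or.inl he.symm
    have h4 := Finset.card_le_card hsub
    have h5 := two a b
    omega
  have hbd : b ≠ d := by
    intro he
    have hsub : S ⊆ {a, b} := by
      rw [hS]; intro x hx
      simp only [Finset.mem_insert, Finset.mem_singleton] at hx ⊢
      rcases hx with rfl | rfl | rfl
      · exact Or.inl rfl
      · exact Or.inr rfl
      · exact Or.inr he.symm
    have h4 := Finset.card_le_card hsub
    have h5 := two a b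
    omega
  have hbS : b ∈ S := by simp [hS]
  have haS : a ∈ S := by simp [hS]
  have hdS : d ∈ S := by simp [hS]
  have hπa : π a ≠ a := Equiv.Perm.mem_support.1 (hSsub haS)
  have hπb : c ≠ b := hc ▸ Equiv.Perm.mem_support.1 (hSsub hbS)
  -- π' d = d gives c = d
  have hd' : c = d := by
    have h1 : Equiv.swap a c (π (Equiv.swap a b d)) = d := hdisj d hdS
    rw [Equiv.swap_apply_of_ne_of_ne (Ne.symm had) (Ne.symm hbd)] at h1
    have h2 : π d = a := by rw [hd, Equiv.Perm.inv_def, Equiv.apply_symm_apply]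
    rw [h2, Equiv.swap_apply_left] at h1
    exact h1
  have hπc : π c = a := by rw [hd'] at hc ⊢; rw [hd, Equiv.Perm.inv_def, Equiv.apply_symm_apply]
  -- π' b = b gives π a = b
  have hπab : π a = b := by
    have h1 : Equiv.swap a c (π (Equiv.swap a b b)) = b := hdisj b hbS
    rw [Equiv.swap_apply_right] at h1
    by_cases h2 : π a = a
    · exact absurd h2 hπa
    by_cases h3 : π a = c
    · rw [h3, Equiv.swap_apply_right] at h1; exact absurd h1 hab
    · rwa [Equiv.swap_apply_of_ne_of_ne h2 h3] at h1
  exact ⟨hπab, hπc, hab, Ne.symm hπb, fun hcon => had (hcon.trans hd')⟩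



theorem cycleOf_last_of_hd_sub_eq_three (n : ℕ) (σ τ : Equiv.Perm (Fin (n + 1)))
    (h : (hd σ τ : ℤ) - (hd (contract σ) (contract τ) : ℤ) = 3) :
    ((τ * σ⁻¹).cycleOf (Fin.last n)).support.card = 3 ∧
      τ * σ⁻¹ =
        (Equiv.swap (Fin.last n) (σ (Fin.last n)) *
            Equiv.swap (σ (Fin.last n)) (τ (Fin.last n))) *
          (extendPerm (contract τ) * (extendPerm (contract σ))⁻¹) := by
  set a := Fin.last n with ha
  set b := σ a with hb
  set c := τ a with hcdef
  set π := τ * σ⁻¹ with hπ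
  have hext : extendPerm (contract τ) * (extendPerm (contract σ))⁻¹ =
      Equiv.swap a c * π * Equiv.swap a b := by
    rw [extendPerm_contract σ, extendPerm_contract τ, mul_inv_rev, Equiv.swap_inv, hπ,
      ← ha, ← hb, ← hcdef]
    group
  have hπb : π b = c := by
    rw [hπ, hb, hcdef, Equiv.Perm.mul_apply, Equiv.Perm.inv_def, Equiv.symm_apply_apply]
  have hhd1 : hd σ τ = π.support.card := hd_eq_card_support σ τ
  have hhd2 : hd (contract σ) (contract τ) = (Equiv.swap a c * π * Equiv.swap a b).support.card := by
    rw [hd_eq_card_support, ← hext, ← extendPerm_inv, ← extendPerm_mul, extendPerm_support_card]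
  have hkey := key_lemma π a b c hπb (by rw [hhd1, hhd2] at h; exact_mod_cast h)
  obtain ⟨h1, h2, hab, hbc, hac⟩ := hkey
  set g := Equiv.swap a b * Equiv.swap b c with hg
  have hnodup : List.Nodup [a, b, c] := by simp [hab, hbc, hac]
  have hgsupp : g.support = {a, b, c} := Equiv.Perm.support_swap_mul_swap hnodup
  have hcard3 : ({a, b, c} : Finset (Fin (n + 1))).card = 3 :=
    Finset.card_eq_three.2 ⟨a, b, c, hab, hac, hbc, rfl⟩
  have hgcycle : g.IsCycle :=
    (card_support_eq_three_iff.1 (by rw [hgsupp]; exact hcard3)).isCycle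
  have hga : g a = b := by
    rw [hg, Equiv.Perm.mul_apply, Equiv.swap_apply_of_ne_of_ne hab hac, Equiv.swap_apply_left]
  have hgb : g b = c := by
    rw [hg, Equiv.Perm.mul_apply, Equiv.swap_apply_left,
      Equiv.swap_apply_of_ne_of_ne (Ne.symm hac) (Ne.symm hbc)]
  have hgc : g c = a := by
    rw [hg, Equiv.Perm.mul_apply, Equiv.swap_apply_right, Equiv.swap_apply_right]
  have hmem : g ∈ π.cycleFactorsFinset := by
    rw [Equiv.Perm.mem_cycleFactorsFinset_iff]
    refine ⟨hgcycle, fun x hx => ?_⟩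
    rw [hgsupp] at hx
    simp only [Finset.mem_insert, Finset.mem_singleton] at hx
    rcases hx with rfl | rfl | rfl
    · rw [hga, h1]
    · rw [hgb, hπb]
    · rw [hgc, h2]
  have hcyc : π.cycleOf a = g :=
    (Equiv.Perm.cycle_is_cycleOf (by rw [hgsupp]; simp) hmem).symm
  constructor
  · rw [hcyc, hgsupp, hcard3]
  · rw [hext]
    refine Equiv.ext fun x => ?_
    show π x = g (Equiv.swap a c (π (Equiv.swap a b x)))
    by_cases hxa : x = a
    · subst hxa
      rw [Equiv.swap_apply_left, hπb, Equiv.swap_apply_right, hga, h1]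
    by_cases hxb : x = b
    · subst hxb
      rw [Equiv.swap_apply_right, h1,
        Equiv.swap_apply_of_ne_of_ne (Ne.symm hab) hbc, hgb, hπb]
    by_cases hxc : x = c
    · subst hxc
      rw [Equiv.swap_apply_of_ne_of_ne (Ne.symm hac) (Ne.symm hbc), h2,
        Equiv.swap_apply_left, hgc]
    · rw [Equiv.swap_apply_of_ne_of_ne hxa hxb]
      have hp1 : π x ≠ a := fun hcon => hxc (π.injective (hcon.trans h2.symm))
      have hp2 : π x ≠ c := fun hcon => hxb (π.injective (hcon.trans hπb.symm))
      have hp3 : π x ≠ b := fun hcon => hxa (π.injective (hcon.trans h1.symm))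
      rw [Equiv.swap_apply_of_ne_of_ne hp1 hp2]
      show π x = Equiv.swap a b (Equiv.swap b c (π x))
      rw [Equiv.swap_apply_of_ne_of_ne hp3 hp2, Equiv.swap_apply_of_ne_of_ne hp1 hp3]
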